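/- arXiv:1611.09744 — 4 statements merged into one kernel-verified Lean document; each statement's English description precedes it below -/
import Mathlib

section
/- There exists an absolute constant C0 > 0 such that for every d ≥ 3 the following holds: any estimator T̂ (measurable function of y, not depending on σ) satisfying sup_{θ ∈ Θ_1} E_{θ,σ}[(T̂(y) − L(θ))²] ≤ C0 σ² d for all σ > 0, must satisfy, for every fixed σ > 0, sup_{θ ∈ Θ_d} E_{θ,σ}[(T̂(y) − L(θ))²] = ∞. -/
open MeasureTheory ProbabilityTheory

/-- Law of `y = θ + σ·ξ` with `ξ` i.i.d. standard normal: the product of Gaussians `N(θ j, σ²)`. -/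
noncomputable def gaussMeasure (d : ℕ) (θ : Fin d → ℝ) (σ : ℝ) : Measure (Fin d → ℝ) :=
  Measure.pi fun j => gaussianReal (θ j) (Real.toNNReal (σ ^ 2))

/-- The sparsity class `Θ_s`: vectors with at most `s` nonzero coordinates. -/
def Theta (d s : ℕ) : Set (Fin d → ℝ) := {θ | {j | θ j ≠ 0}.ncard ≤ s}

/-- The linear functional `L(θ) = ∑ θ_j`. -/
noncomputable def Lfun (d : ℕ) (θ : Fin d → ℝ) : ℝ := ∑ j, θ j

/-- The rate `Φ^L(σ, s) = σ² s² log(1 + d (log d) / s²)`. -/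
noncomputable def PhiL (d : ℕ) (σ : ℝ) (s : ℕ) : ℝ :=
  σ ^ 2 * (s : ℝ) ^ 2 * Real.log (1 + (d : ℝ) * Real.log d / (s : ℝ) ^ 2)

/-!
Suppose the maximal risk `S` of `T` over `ℝ^d` at noise level `σ` were finite, and put the
prior `θ ~ N(0, τ² I_d)` on the parameter. Then `L(θ) ~ N(0, d τ²)`, and averaging the pointwise
bound `L(θ)² ≤ 2 (T(y) - L(θ))² + 2 T(y)²` over `y ~ N(θ, σ² I_d)` and then over the prior gives
`d τ² ≤ 2 S + 2 E[T(y)²]`, where now `y ~ N(0, (τ² + σ²) I_d)` is the observation at `θ = 0` with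
noise level `√(τ² + σ²)`. The assumed risk bound at `θ = 0 ∈ Θ_1` caps the last term by
`2 C₀ (τ² + σ²) d`, which for `C₀ < 1/2` and `τ → ∞` contradicts the finiteness of `S`.
-/

open scoped ENNReal NNReal

theorem MeasureTheory.Measure.pi_conv_pi {ι M : Type*} [Fintype ι] [AddMonoid M]
    [MeasurableSpace M] [MeasurableAdd₂ M] (μ ν : ι → Measure M) [∀ i, IsFiniteMeasure (μ i)]
    [∀ i, IsFiniteMeasure (ν i)] :
    Measure.pi μ ∗ Measure.pi ν = Measure.pi fun i => μ i ∗ ν i := by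
  rw [Measure.conv, ← (measurePreserving_arrowProdEquivProdArrow M M ι μ ν).map_eq,
    Measure.map_map (by fun_prop) (MeasurableEquiv.measurable _)]
  exact Measure.pi_map_pi fun _ => measurable_add.aemeasurable

section GaussianReal

variable {ι : Type*} [Fintype ι]

lemma lintegral_sq_sub_gaussianReal (μ : ℝ) (v : ℝ≥0) :
    ∫⁻ x, ENNReal.ofReal ((x - μ) ^ 2) ∂gaussianReal μ v = v := by
  rw [← ofReal_integral_eq_lintegral_ofReal]
  · have hvar := variance_fun_id_gaussianReal (μ := μ) (v := v)
    rw [variance_eq_integral aemeasurable_id', integral_id_gaussianReal] at hvar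
    simp [hvar]
  · exact ((memLp_id_gaussianReal 2).sub (memLp_const μ)).integrable_sq
  · exact Filter.Eventually.of_forall fun _ => sq_nonneg _

lemma map_sum_pi_gaussianReal (m : ι → ℝ) (v : ι → ℝ≥0) :
    (Measure.pi fun i => gaussianReal (m i) (v i)).map (fun x => ∑ i, x i)
      = gaussianReal (∑ i, m i) (∑ i, v i) := by
  refine Measure.ext_of_charFun (funext fun t => ?_)
  rw [charFun_apply_real, integral_map (by fun_prop) (by fun_prop), charFun_gaussianReal]
  have exp_sum_eq_prod (x : ι → ℝ) : Complex.exp (t * ↑(∑ i, x i) * Complex.I)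
      = ∏ i, Complex.exp (t * x i * Complex.I) := by
    rw [← Complex.exp_sum]
    push_cast
    rw [Finset.mul_sum, Finset.sum_mul]
  simp_rw [exp_sum_eq_prod]
  rw [integral_fintype_prod_eq_prod fun _ (x : ℝ) => Complex.exp (t * x * Complex.I)]
  simp_rw [← charFun_apply_real, charFun_gaussianReal, ← Complex.exp_sum]
  push_cast
  congr 1
  simp only [Finset.sum_sub_distrib, Finset.mul_sum, Finset.sum_mul, Finset.sum_div]

lemma pi_gaussianReal_eq_map_add (m : ι → ℝ) (v : ι → ℝ≥0) :
    Measure.pi (fun i => gaussianReal (m i) (v i))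
      = (Measure.pi fun i => gaussianReal 0 (v i)).map (m + ·) := by
  change _ = (Measure.pi _).map fun x i => m i + x i
  rw [Measure.pi_map_pi fun _ => (measurable_const_add _).aemeasurable]
  simp_rw [gaussianReal_map_const_add, zero_add]

lemma lintegral_lintegral_pi_gaussianReal (a b : ι → ℝ≥0) {f : (ι → ℝ) → ℝ≥0∞}
    (hf : Measurable f) :
    ∫⁻ θ, ∫⁻ y, f y ∂(Measure.pi fun i => gaussianReal (θ i) (b i))
        ∂(Measure.pi fun i => gaussianReal 0 (a i))
      = ∫⁻ y, f y ∂(Measure.pi fun i => gaussianReal 0 (a i + b i)) := by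
  calc _ = ∫⁻ θ, ∫⁻ z, f (θ + z) ∂(Measure.pi fun i => gaussianReal 0 (b i))
        ∂(Measure.pi fun i => gaussianReal 0 (a i)) := by
        refine lintegral_congr fun θ => ?_
        rw [pi_gaussianReal_eq_map_add, lintegral_map hf (measurable_const_add θ)]
    _ = ∫⁻ y, f y ∂(Measure.pi (fun i => gaussianReal 0 (a i)) ∗
          Measure.pi fun i => gaussianReal 0 (b i)) := (Measure.lintegral_conv hf).symm
    _ = _ := by simp_rw [Measure.pi_conv_pi, gaussianReal_conv_gaussianReal, add_zero]

end GaussianReal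

lemma ofReal_sq_le_lintegral_sq_sub_add_lintegral_sq {Ω : Type*} [MeasurableSpace Ω]
    (P : Measure Ω) [IsProbabilityMeasure P] {X : Ω → ℝ} (hX : Measurable X) (c : ℝ) :
    ENNReal.ofReal (c ^ 2)
      ≤ 2 * ∫⁻ ω, ENNReal.ofReal ((X ω - c) ^ 2) ∂P + 2 * ∫⁻ ω, ENNReal.ofReal (X ω ^ 2) ∂P := by
  have sq_le (x : ℝ) : ENNReal.ofReal (c ^ 2)
      ≤ 2 * ENNReal.ofReal ((x - c) ^ 2) + 2 * ENNReal.ofReal (x ^ 2) := by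
    rw [← ENNReal.ofReal_ofNat 2, ← ENNReal.ofReal_mul zero_le_two,
      ← ENNReal.ofReal_mul zero_le_two, ← ENNReal.ofReal_add (by positivity) (by positivity)]
    exact ENNReal.ofReal_le_ofReal (by nlinarith [sq_nonneg (2 * x - c)])
  calc ENNReal.ofReal (c ^ 2) = ∫⁻ _, ENNReal.ofReal (c ^ 2) ∂P := by simp
    _ ≤ ∫⁻ ω, (2 * ENNReal.ofReal ((X ω - c) ^ 2) + 2 * ENNReal.ofReal (X ω ^ 2)) ∂P :=
        lintegral_mono fun ω => sq_le (X ω)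
    _ = _ := by
        rw [lintegral_add_left (by fun_prop), lintegral_const_mul _ (by fun_prop),
          lintegral_const_mul _ (by fun_prop)]

section GaussianSequenceModel

variable {d : ℕ}

instance (θ : Fin d → ℝ) (σ : ℝ) : IsProbabilityMeasure (gaussMeasure d θ σ) := by
  unfold gaussMeasure; infer_instance

lemma Theta_eq_univ {s : ℕ} (hs : d ≤ s) : Theta d s = Set.univ :=
  Set.eq_univ_of_forall fun _ => (Set.ncard_le_card _).trans <| by simpa using hs

lemma zero_mem_Theta (s : ℕ) : (0 : Fin d → ℝ) ∈ Theta d s := by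
  simp [Theta]

noncomputable def risk (d : ℕ) (T : (Fin d → ℝ) → ℝ) (σ : ℝ) (θ : Fin d → ℝ) : ℝ≥0∞ :=
  ∫⁻ y, ENNReal.ofReal ((T y - Lfun d θ) ^ 2) ∂gaussMeasure d θ σ

lemma lintegral_sq_Lfun_gaussMeasure (τ : ℝ) :
    ∫⁻ θ, ENNReal.ofReal (Lfun d θ ^ 2) ∂gaussMeasure d 0 τ = ENNReal.ofReal (d * τ ^ 2) := by
  rw [show Lfun d = fun θ => ∑ j, θ j from rfl,
    ← lintegral_map (f := fun x => ENNReal.ofReal (x ^ 2)) (by fun_prop) (by fun_prop)]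
  simp only [gaussMeasure, Pi.zero_apply]
  rw [map_sum_pi_gaussianReal, Finset.sum_const_zero]
  convert lintegral_sq_sub_gaussianReal 0 (∑ _ : Fin d, (τ ^ 2).toNNReal) using 1
  · simp_rw [sub_zero]
  · rw [ENNReal.ofReal_mul (Nat.cast_nonneg d), ENNReal.ofReal_natCast, ENNReal.ofReal]
    simp

lemma lintegral_lintegral_gaussMeasure (τ σ : ℝ) {f : (Fin d → ℝ) → ℝ≥0∞} (hf : Measurable f) :
    ∫⁻ θ, ∫⁻ y, f y ∂gaussMeasure d θ σ ∂gaussMeasure d 0 τ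
      = ∫⁻ y, f y ∂gaussMeasure d 0 √(τ ^ 2 + σ ^ 2) := by
  simp only [gaussMeasure, Pi.zero_apply]
  rw [lintegral_lintegral_pi_gaussianReal (fun _ => _) (fun _ => _) hf,
    Real.sq_sqrt (by positivity), Real.toNNReal_add (sq_nonneg τ) (sq_nonneg σ)]

lemma ofReal_mul_sq_le_two_mul_iSup_risk_add (T : (Fin d → ℝ) → ℝ) (hT : Measurable T)
    (σ τ : ℝ) :
    ENNReal.ofReal (d * τ ^ 2) ≤ 2 * (⨆ θ, risk d T σ θ) + 2 * risk d T √(τ ^ 2 + σ ^ 2) 0 := by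
  calc ENNReal.ofReal (d * τ ^ 2) = ∫⁻ θ, ENNReal.ofReal (Lfun d θ ^ 2) ∂gaussMeasure d 0 τ :=
        (lintegral_sq_Lfun_gaussMeasure τ).symm
    _ ≤ ∫⁻ θ, (2 * (⨆ θ, risk d T σ θ)
          + 2 * ∫⁻ y, ENNReal.ofReal (T y ^ 2) ∂gaussMeasure d θ σ) ∂gaussMeasure d 0 τ := by
        refine lintegral_mono fun θ => ?_
        refine (ofReal_sq_le_lintegral_sq_sub_add_lintegral_sq (gaussMeasure d θ σ) hT
          (Lfun d θ)).trans ?_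
        gcongr
        exact le_iSup (risk d T σ) θ
    _ = 2 * (⨆ θ, risk d T σ θ)
          + 2 * ∫⁻ y, ENNReal.ofReal (T y ^ 2) ∂gaussMeasure d 0 √(τ ^ 2 + σ ^ 2) := by
        rw [lintegral_add_left measurable_const, lintegral_const, measure_univ, mul_one,
          lintegral_const_mul' _ _ ENNReal.ofNat_ne_top,
          lintegral_lintegral_gaussMeasure τ σ (by fun_prop)]
    _ = _ := by simp [risk, Lfun]

end GaussianSequenceModel

/-- Proposition 3: when `σ` is unknown, any estimator whose maximal risk over `Θ₁` is at most
`C₀ σ² d` for every `σ > 0` must have an infinite maximal risk over `Θ_d`, for every fixed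
`σ > 0`. -/
theorem no_simultaneous_adaptation_to_sigma :
    ∃ C0 : ℝ, 0 < C0 ∧
      ∀ d : ℕ, 3 ≤ d → ∀ T : (Fin d → ℝ) → ℝ, Measurable T →
        (∀ σ : ℝ, 0 < σ → ∀ θ ∈ Theta d 1,
            ∫⁻ y, ENNReal.ofReal ((T y - Lfun d θ) ^ 2) ∂(gaussMeasure d θ σ)
              ≤ ENNReal.ofReal (C0 * σ ^ 2 * d)) →
        ∀ σ : ℝ, 0 < σ →
          (⨆ θ ∈ Theta d d,
            ∫⁻ y, ENNReal.ofReal ((T y - Lfun d θ) ^ 2) ∂(gaussMeasure d θ σ)) = ⊤ := by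
  refine ⟨1 / 4, by norm_num, fun d hd T hT hrisk σ _ => ?_⟩
  change ⨆ θ ∈ Theta d d, risk d T σ θ = ⊤
  rw [Theta_eq_univ le_rfl, iSup_univ]
  by_contra hS
  set S := ⨆ θ, risk d T σ θ
  set τ := √(4 * S.toReal + σ ^ 2 + 1)
  have hτ : τ ^ 2 = 4 * S.toReal + σ ^ 2 + 1 := Real.sq_sqrt (by positivity)
  have hρ : √(τ ^ 2 + σ ^ 2) ^ 2 = τ ^ 2 + σ ^ 2 := Real.sq_sqrt (by positivity)
  have hbound : ENNReal.ofReal (d * τ ^ 2)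
      ≤ ENNReal.ofReal (2 * S.toReal + 2 * (1 / 4 * (τ ^ 2 + σ ^ 2) * d)) := by
    refine (ofReal_mul_sq_le_two_mul_iSup_risk_add T hT σ τ).trans ?_
    have hrisk0 := hrisk √(τ ^ 2 + σ ^ 2) (by positivity) 0 (zero_mem_Theta 1)
    rw [hρ] at hrisk0
    rw [ENNReal.ofReal_add (by positivity) (by positivity), ENNReal.ofReal_mul zero_le_two,
      ENNReal.ofReal_mul zero_le_two, ENNReal.ofReal_toReal hS, ENNReal.ofReal_ofNat]
    gcongr
    exact hrisk0
  have hd' : (3 : ℝ) ≤ d := by exact_mod_cast hd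
  have hbound_real := (ENNReal.ofReal_le_ofReal_iff (by positivity)).mp hbound
  nlinarith [ENNReal.toReal_nonneg (a := S)]
end

section
/- For every α > 0 there is a constant c > 0 depending only on α such that for all d ≥ 3, all σ > 0, and all integers s with 1 ≤ s ≤ ⌊√(d log d/2)⌋ + 1: sup_{θ ∈ Θ_s} E_θ[(L̂_s(y) − L(θ))⁴] ≤ c σ⁴ d⁴ (log d)². -/
open MeasureTheory ProbabilityTheory

/-- The non-adaptive estimators `L̂_s` (known `σ`). -/
noncomputable def LhatS (d : ℕ) (α σ : ℝ) (s : ℕ) (y : Fin d → ℝ) : ℝ :=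
  if (s : ℝ) ≤ Real.sqrt ((d : ℝ) * Real.log d / 2) then
    ∑ j, if α * σ ^ 2 * Real.log (1 + (d : ℝ) * Real.log d / (s : ℝ) ^ 2) < (y j) ^ 2
      then y j else 0
  else ∑ j, y j

/-!
Both branches of `L̂_s` are sums `∑ⱼ η_τ(yⱼ)` of the hard-thresholding rule
`η_τ(x) = x·1{x² > τ}` (with `τ = 0`, i.e. `η_0 = id`, in the unthresholded branch), and in every
case `τ ≤ 2ασ² log d`. Since `η_τ` moves a point by at most `√τ`, each coordinate error
`η_τ(yⱼ) - θⱼ = σξⱼ + (η_τ(yⱼ) - yⱼ)` has fourth moment at most `8(σ⁴ m₄ + τ²)`, where `m₄` is the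
fourth moment of the standard normal law. The power-mean inequality `(∑ⱼ aⱼ)⁴ ≤ d³ ∑ⱼ aⱼ⁴` then
bounds the fourth moment of `L̂_s - L` by `8 d⁴ (m₄ + 4α²) σ⁴ log² d`, using `log d ≥ 1`.
-/

open Real Finset
open scoped ENNReal

lemma Even.pow_sum_le_card_mul_sum_pow {ι : Type*} (s : Finset ι) (a : ι → ℝ) {n : ℕ}
    (hn : Even (n + 1)) : (∑ i ∈ s, a i) ^ (n + 1) ≤ (#s : ℝ) ^ n * ∑ i ∈ s, a i ^ (n + 1) := by
  calc (∑ i ∈ s, a i) ^ (n + 1) = |∑ i ∈ s, a i| ^ (n + 1) := (hn.pow_abs _).symm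
    _ ≤ (∑ i ∈ s, |a i|) ^ (n + 1) := by gcongr; exact abs_sum_le_sum_abs _ _
    _ ≤ (#s : ℝ) ^ n * ∑ i ∈ s, |a i| ^ (n + 1) :=
      _root_.pow_sum_le_card_mul_sum_pow (fun i _ => abs_nonneg _) n
    _ = (#s : ℝ) ^ n * ∑ i ∈ s, a i ^ (n + 1) := by simp only [hn.pow_abs]

lemma lintegral_pow_sum_le_card_mul_sum {ι : Type*} [Fintype ι] {X : ι → Type*}
    [∀ i, MeasurableSpace (X i)] {μ : ∀ i, Measure (X i)} [∀ i, IsProbabilityMeasure (μ i)]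
    {g : ∀ i, X i → ℝ} (hg : ∀ i, Measurable (g i)) {n : ℕ} (hn : Even (n + 1)) :
    ∫⁻ y, ENNReal.ofReal ((∑ i, g i (y i)) ^ (n + 1)) ∂Measure.pi μ
      ≤ (Fintype.card ι : ℝ≥0∞) ^ n * ∑ i, ∫⁻ x, ENNReal.ofReal (g i x ^ (n + 1)) ∂μ i := by
  calc ∫⁻ y, ENNReal.ofReal ((∑ i, g i (y i)) ^ (n + 1)) ∂Measure.pi μ
      ≤ ∫⁻ y, (Fintype.card ι : ℝ≥0∞) ^ n * ∑ i, ENNReal.ofReal (g i (y i) ^ (n + 1))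
          ∂Measure.pi μ := by
        refine lintegral_mono fun y => ?_
        rw [← ENNReal.ofReal_natCast, ← ENNReal.ofReal_pow (Nat.cast_nonneg _),
          ← ENNReal.ofReal_sum_of_nonneg (fun i _ => hn.pow_nonneg _),
          ← ENNReal.ofReal_mul (by positivity)]
        exact ENNReal.ofReal_le_ofReal (hn.pow_sum_le_card_mul_sum_pow univ _)
    _ = (Fintype.card ι : ℝ≥0∞) ^ n * ∑ i, ∫⁻ x, ENNReal.ofReal (g i x ^ (n + 1)) ∂μ i := by
        rw [lintegral_const_mul' _ _ (by simp),
          lintegral_finsetSum _ fun i _ => by fun_prop]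
        congr 1
        exact sum_congr rfl fun i _ => (measurePreserving_eval μ i).lintegral_comp
          ((hg i).pow_const _).ennreal_ofReal

/-- Equal to `3`; only its finiteness matters here. -/
noncomputable def stdGaussianFourthMoment : ℝ := ∫ z, z ^ 4 ∂gaussianReal 0 1

lemma stdGaussianFourthMoment_nonneg : 0 ≤ stdGaussianFourthMoment :=
  integral_nonneg fun z => by positivity

lemma integrable_sub_pow_gaussianReal (μ c : ℝ) (v : NNReal) (n : ℕ) :
    Integrable (fun x => (x - c) ^ n) (gaussianReal μ v) := by
  rcases n.eq_zero_or_pos with rfl | hn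
  · simp
  refine (integrable_norm_iff (by fun_prop)).1 ?_
  simpa [abs_pow] using
    ((memLp_id_gaussianReal n).sub (memLp_const c)).integrable_norm_pow hn.ne'

lemma gaussianReal_eq_map_affine (μ σ : ℝ) :
    gaussianReal μ (σ ^ 2).toNNReal = (gaussianReal 0 1).map (fun z => σ * z + μ) := by
  change _ = (gaussianReal 0 1).map ((· + μ) ∘ (σ * ·))
  rw [← Measure.map_map (measurable_add_const μ) (measurable_const_mul σ),
    gaussianReal_map_const_mul, gaussianReal_map_add_const]
  congr 1
  · ring
  · ext; simp [sq_nonneg]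

lemma integral_sub_pow_four_gaussianReal (μ σ : ℝ) :
    ∫ x, (x - μ) ^ 4 ∂gaussianReal μ (σ ^ 2).toNNReal = σ ^ 4 * stdGaussianFourthMoment := by
  rw [gaussianReal_eq_map_affine, integral_map (by fun_prop) (by fun_prop),
    stdGaussianFourthMoment, ← integral_const_mul]
  congr 1 with z
  ring

lemma lintegral_pow_four_sub_gaussianReal_le {f : ℝ → ℝ} {τ : ℝ} (hf : ∀ x, (f x - x) ^ 2 ≤ τ)
    (μ σ : ℝ) :
    ∫⁻ x, ENNReal.ofReal ((f x - μ) ^ 4) ∂gaussianReal μ (σ ^ 2).toNNReal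
      ≤ ENNReal.ofReal (8 * (σ ^ 4 * stdGaussianFourthMoment + τ ^ 2)) := by
  have hpt : ∀ x, (f x - μ) ^ 4 ≤ 8 * ((x - μ) ^ 4 + τ ^ 2) := fun x => by
    have hτ : (f x - x) ^ 4 ≤ τ ^ 2 := by
      rw [show (f x - x) ^ 4 = ((f x - x) ^ 2) ^ 2 by ring]
      exact pow_le_pow_left₀ (sq_nonneg _) (hf x) 2
    calc (f x - μ) ^ 4 = ((x - μ) + (f x - x)) ^ 4 := by ring
      _ ≤ 2 ^ 3 * ((x - μ) ^ 4 + (f x - x) ^ 4) := Even.add_pow_le (by decide)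
      _ ≤ 8 * ((x - μ) ^ 4 + τ ^ 2) := by linarith
  have hint : Integrable (fun x => 8 * ((x - μ) ^ 4 + τ ^ 2)) (gaussianReal μ (σ ^ 2).toNNReal) :=
    ((integrable_sub_pow_gaussianReal _ _ _ 4).add (integrable_const _)).const_mul 8
  calc ∫⁻ x, ENNReal.ofReal ((f x - μ) ^ 4) ∂gaussianReal μ (σ ^ 2).toNNReal
      ≤ ∫⁻ x, ENNReal.ofReal (8 * ((x - μ) ^ 4 + τ ^ 2)) ∂gaussianReal μ (σ ^ 2).toNNReal :=
        lintegral_mono fun x => ENNReal.ofReal_le_ofReal (hpt x)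
    _ = ENNReal.ofReal (8 * (σ ^ 4 * stdGaussianFourthMoment + τ ^ 2)) := by
        rw [← ofReal_integral_eq_lintegral_ofReal hint (ae_of_all _ fun x => by positivity),
          integral_const_mul, integral_add (integrable_sub_pow_gaussianReal _ _ _ 4)
          (integrable_const _), integral_sub_pow_four_gaussianReal]
        simp

noncomputable def hardThreshold (τ x : ℝ) : ℝ := if τ < x ^ 2 then x else 0

lemma measurable_hardThreshold (τ : ℝ) : Measurable (hardThreshold τ) :=
  Measurable.ite (measurableSet_lt measurable_const (by fun_prop)) measurable_id measurable_const

lemma hardThreshold_zero (x : ℝ) : hardThreshold 0 x = x := by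
  rcases eq_or_ne x 0 with rfl | hx
  · simp [hardThreshold]
  · simp [hardThreshold, hx]

lemma sq_hardThreshold_sub_le {τ : ℝ} (hτ : 0 ≤ τ) (x : ℝ) : (hardThreshold τ x - x) ^ 2 ≤ τ := by
  unfold hardThreshold
  split_ifs with h
  · simpa using hτ
  · simpa using not_lt.1 h

/-- The threshold used by `L̂_s`; it is `0` in the unthresholded branch, where
`hardThreshold 0 = id`. -/
noncomputable def LhatSThreshold (d : ℕ) (α σ : ℝ) (s : ℕ) : ℝ :=
  if (s : ℝ) ≤ √((d : ℝ) * log d / 2) then α * σ ^ 2 * log (1 + (d : ℝ) * log d / (s : ℝ) ^ 2)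
  else 0

lemma LhatS_eq_sum_hardThreshold (d : ℕ) (α σ : ℝ) (s : ℕ) (y : Fin d → ℝ) :
    LhatS d α σ s y = ∑ j, hardThreshold (LhatSThreshold d α σ s) (y j) := by
  unfold LhatS LhatSThreshold
  split_ifs
  · rfl
  · simp only [hardThreshold_zero]

lemma LhatSThreshold_nonneg {α : ℝ} (hα : 0 ≤ α) (d : ℕ) (σ : ℝ) (s : ℕ) :
    0 ≤ LhatSThreshold d α σ s := by
  unfold LhatSThreshold
  split_ifs
  · have : 0 ≤ (d : ℝ) * log d := mul_nonneg d.cast_nonneg (log_natCast_nonneg d)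
    exact mul_nonneg (by positivity) (log_nonneg (by simp; positivity))
  · rfl

lemma LhatSThreshold_le {α : ℝ} (hα : 0 ≤ α) {d s : ℕ} (hd : 1 ≤ d) (hs : 1 ≤ s) (σ : ℝ) :
    LhatSThreshold d α σ s ≤ 2 * α * σ ^ 2 * log d := by
  have hd' : (1 : ℝ) ≤ d := by exact_mod_cast hd
  have hlog : 0 ≤ log d := log_nonneg hd'
  unfold LhatSThreshold
  split_ifs
  · have harg : 1 + (d : ℝ) * log d / (s : ℝ) ^ 2 ≤ (d : ℝ) ^ 2 := by
      have h1 : (d : ℝ) * log d / (s : ℝ) ^ 2 ≤ (d : ℝ) * log d :=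
        div_le_self (by positivity) (one_le_pow₀ (by exact_mod_cast hs))
      nlinarith [log_le_sub_one_of_pos (by linarith : (0 : ℝ) < d)]
    calc α * σ ^ 2 * log (1 + (d : ℝ) * log d / (s : ℝ) ^ 2)
        ≤ α * σ ^ 2 * log ((d : ℝ) ^ 2) := by gcongr
      _ = 2 * α * σ ^ 2 * log d := by rw [log_pow]; push_cast; ring
  · positivity

lemma lintegral_sum_hardThreshold_sub_pow_four_le (d : ℕ) (θ : Fin d → ℝ) (σ : ℝ) {τ : ℝ}
    (hτ : 0 ≤ τ) :
    ∫⁻ y, ENNReal.ofReal ((∑ j, hardThreshold τ (y j) - Lfun d θ) ^ 4) ∂gaussMeasure d θ σ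
      ≤ ENNReal.ofReal (8 * d ^ 4 * (σ ^ 4 * stdGaussianFourthMoment + τ ^ 2)) := by
  have hsum : ∀ y : Fin d → ℝ,
      ∑ j, hardThreshold τ (y j) - Lfun d θ = ∑ j, (hardThreshold τ (y j) - θ j) := fun y => by
    rw [Lfun, sum_sub_distrib]
  simp_rw [hsum]
  calc _ ≤ (d : ℝ≥0∞) ^ 3 * ∑ j, ∫⁻ x, ENNReal.ofReal ((hardThreshold τ x - θ j) ^ 4)
          ∂gaussianReal (θ j) (σ ^ 2).toNNReal := by
        simpa only [Fintype.card_fin, Nat.reduceAdd, gaussMeasure] using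
          lintegral_pow_sum_le_card_mul_sum (n := 3)
            (fun j => (measurable_hardThreshold τ).sub_const (θ j)) (by decide)
    _ ≤ (d : ℝ≥0∞) ^ 3 * ∑ _j : Fin d,
          ENNReal.ofReal (8 * (σ ^ 4 * stdGaussianFourthMoment + τ ^ 2)) := by
        gcongr with j
        exact lintegral_pow_four_sub_gaussianReal_le (sq_hardThreshold_sub_le hτ) _ _
    _ = ENNReal.ofReal (8 * d ^ 4 * (σ ^ 4 * stdGaussianFourthMoment + τ ^ 2)) := by
        rw [sum_const, card_univ, Fintype.card_fin, nsmul_eq_mul, ← ENNReal.ofReal_natCast,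
          ← ENNReal.ofReal_pow d.cast_nonneg, ← ENNReal.ofReal_mul (by positivity),
          ← ENNReal.ofReal_mul (by positivity)]
        ring_nf

/-- Lemma 1 (first bound): for all `s ≤ ⌊√(d log d / 2)⌋ + 1`,
`E_θ (L̂_s - L)⁴ ≤ c σ⁴ d⁴ (log d)²` uniformly over `Θ_s`. -/
theorem fourth_moment_LhatS :
    ∀ α : ℝ, 0 < α → ∃ c : ℝ, 0 < c ∧
      ∀ d : ℕ, 3 ≤ d → ∀ σ : ℝ, 0 < σ →
        ∀ s : ℕ, 1 ≤ s → s ≤ Nat.floor (Real.sqrt ((d : ℝ) * Real.log d / 2)) + 1 →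
          ∀ θ ∈ Theta d s,
            ∫⁻ y, ENNReal.ofReal ((LhatS d α σ s y - Lfun d θ) ^ 4) ∂(gaussMeasure d θ σ)
              ≤ ENNReal.ofReal (c * σ ^ 4 * (d : ℝ) ^ 4 * (Real.log d) ^ 2) := by
  intro α hα
  have hM := stdGaussianFourthMoment_nonneg
  refine ⟨8 * (stdGaussianFourthMoment + 4 * α ^ 2), by positivity, ?_⟩
  intro d hd σ _ s hs _ θ _
  have hlog : 1 ≤ log d := by
    have hd3 : (3 : ℝ) ≤ d := by exact_mod_cast hd
    rw [le_log_iff_exp_le (by positivity)]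
    exact (exp_one_lt_d9.trans_le (by linarith)).le
  set τ := LhatSThreshold d α σ s
  have hτ0 : 0 ≤ τ := LhatSThreshold_nonneg hα.le d σ s
  have hτ : τ ≤ 2 * α * σ ^ 2 * log d := LhatSThreshold_le hα.le (by omega) hs σ
  simp_rw [LhatS_eq_sum_hardThreshold]
  refine (lintegral_sum_hardThreshold_sub_pow_four_le d θ σ hτ0).trans
    (ENNReal.ofReal_le_ofReal ?_)
  have hτsq : τ ^ 2 ≤ 4 * α ^ 2 * σ ^ 4 * log d ^ 2 := by
    calc τ ^ 2 ≤ (2 * α * σ ^ 2 * log d) ^ 2 := pow_le_pow_left₀ hτ0 hτ 2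
      _ = _ := by ring
  have hσM : σ ^ 4 * stdGaussianFourthMoment ≤ σ ^ 4 * stdGaussianFourthMoment * log d ^ 2 :=
    le_mul_of_one_le_right (by positivity) (one_le_pow₀ hlog)
  calc 8 * (d : ℝ) ^ 4 * (σ ^ 4 * stdGaussianFourthMoment + τ ^ 2)
      ≤ 8 * d ^ 4 * ((stdGaussianFourthMoment + 4 * α ^ 2) * σ ^ 4 * log d ^ 2) := by
        gcongr; linarith
    _ = _ := by ring
end

section
/- Let P and Q be two probability measures on a measurable space (X, 𝓤) with Q absolutely continuous with respect to P, and let χ²(Q,P) = ∫ (dQ/dP)² dP − 1 denote the chi-square divergence. Then for every q > 0 and every τ ∈ (0,1): inf over measurable sets A ∈ 𝓤 of [ q·P(A) + Q(Aᶜ) ] ≥ (qτ/(1 + qτ))·(1 − τ·(χ²(Q,P) + 1)). -/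
open MeasureTheory

/-- Lemma 7: for probability measures `Q ≪ P`, any `q > 0`, any `τ ∈ (0,1)` and any measurable
event `A`: `q P(A) + Q(Aᶜ) ≥ (qτ/(1 + qτ)) (1 - τ (χ²(Q,P) + 1))`, where
`χ²(Q,P) = ∫ (dQ/dP)² dP - 1`. -/
theorem unbalanced_testing_lower_bound {X : Type*} [MeasurableSpace X]
    (P Q : Measure X) [IsProbabilityMeasure P] [IsProbabilityMeasure Q]
    (hQP : Q ≪ P) (q τ : ℝ) (hq : 0 < q) (hτ0 : 0 < τ) (hτ1 : τ < 1)
    (A : Set X) (hA : MeasurableSet A) :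
    ENNReal.ofReal (q * τ) / (1 + ENNReal.ofReal (q * τ)) *
        (1 - ENNReal.ofReal τ * (((∫⁻ x, (Q.rnDeriv P x) ^ 2 ∂P) - 1) + 1))
      ≤ ENNReal.ofReal q * P A + Q Aᶜ := by
  set f := Q.rnDeriv P with hf
  have hfm : Measurable f := Measure.measurable_rnDeriv Q P
  set t := ENNReal.ofReal τ with ht
  have ht0 : t ≠ 0 := (ENNReal.ofReal_pos.mpr hτ0).ne'
  set I := ∫⁻ x, f x ^ 2 ∂P with hI
  set B : Set X := {x | f x * t ≤ 1} with hBdef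
  have hB : MeasurableSet B := measurableSet_le (hfm.mul_const t) measurable_const
  have hQs : ∀ s : Set X, MeasurableSet s → Q s = ∫⁻ x in s, f x ∂P := by
    intro s hs
    exact (Measure.setLIntegral_rnDeriv hQP s).symm
  -- Step 1: t * Q (A ∩ B) ≤ P A
  have step1 : t * Q (A ∩ B) ≤ P A := by
    rw [hQs (A ∩ B) (hA.inter hB), ← lintegral_const_mul t hfm]
    calc ∫⁻ x in A ∩ B, t * f x ∂P ≤ ∫⁻ x in A ∩ B, 1 ∂P := by
          refine setLIntegral_mono' (hA.inter hB) ?_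
          intro x hx
          rw [mul_comm]
          exact hx.2
      _ = P (A ∩ B) := by simp
      _ ≤ P A := measure_mono Set.inter_subset_left
  -- Step 2: Q Bᶜ ≤ t * I
  have step2 : Q Bᶜ ≤ t * I := by
    rw [hQs Bᶜ hB.compl]
    calc ∫⁻ x in Bᶜ, f x ∂P ≤ ∫⁻ x in Bᶜ, t * f x ^ 2 ∂P := by
          refine setLIntegral_mono' hB.compl ?_
          intro x hx
          have h1 : 1 ≤ f x * t := le_of_not_ge hx
          calc f x = f x * 1 := (mul_one _).symm
            _ ≤ f x * (f x * t) := by gcongr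
            _ = t * f x ^ 2 := by ring
      _ ≤ ∫⁻ x, t * f x ^ 2 ∂P := setLIntegral_le_lintegral _ _
      _ = t * I := lintegral_const_mul t (hfm.pow_const 2)
  set c := ENNReal.ofReal (q * τ) with hc
  have hcq : c = ENNReal.ofReal q * t := ENNReal.ofReal_mul hq.le
  -- c/(1+c) ≤ min c 1
  have hfrac : c / (1 + c) ≤ min c 1 := by
    refine le_min ?_ ?_
    · calc c / (1 + c) ≤ c / 1 := by gcongr; exact le_self_add
        _ = c := by simp
    · exact ENNReal.div_le_of_le_mul (by simp [le_self_add])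
  -- 1 - t * I ≤ Q B
  have hQB : 1 - t * I ≤ Q B := by
    have h1 : Q B + Q Bᶜ = 1 := by
      rw [measure_add_measure_compl hB]; simp
    calc 1 - t * I ≤ 1 - Q Bᶜ := tsub_le_tsub_left step2 1
      _ ≤ Q B := by
          rw [tsub_le_iff_right, h1]
  -- final chain
  have hII : 1 - t * ((I - 1) + 1) ≤ 1 - t * I := by
    refine tsub_le_tsub_left ?_ 1
    gcongr
    exact le_tsub_add
  calc c / (1 + c) * (1 - t * ((I - 1) + 1))
      ≤ min c 1 * (1 - t * I) := by
        apply mul_le_mul' hfrac hII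
    _ ≤ min c 1 * Q B := by gcongr
    _ = min c 1 * (Q (B ∩ A) + Q (B \ A)) := by
        rw [measure_inter_add_diff B hA]
    _ = min c 1 * Q (B ∩ A) + min c 1 * Q (B \ A) := mul_add _ _ _
    _ ≤ c * Q (A ∩ B) + 1 * Q Aᶜ := by
        refine add_le_add ?_ ?_
        · rw [Set.inter_comm A B]
          exact mul_le_mul' (min_le_left _ _) le_rfl
        · exact mul_le_mul' (min_le_right _ _) (measure_mono (fun x hx => hx.2))
    _ = ENNReal.ofReal q * (t * Q (A ∩ B)) + Q Aᶜ := by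
        rw [hcq, one_mul, mul_assoc]
    _ ≤ ENNReal.ofReal q * P A + Q Aᶜ := by gcongr
end

section
/- For every integer d ≥ 6, every real a ∈ [1/4, 1/2), and every integer s with d^a ≤ s ≤ d, setting ρ² = (1/2 − a)·log(1 + d(log d)/s²), one has (1 + (s/d)(e^{ρ²} − 1))^s ≤ d^{1/2 − a}. -/
/-! Bernoulli's inequality `(1 + x)^b ≤ 1 + b x` for `b ∈ [0, 1]` followed by `1 + y ≤ e^y` bounds
the `s`-th power by `exp(s · (s/d) · b · d log d / s²) = exp(b log d) = d^b`. -/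

open Real

theorem one_add_mul_rpow_sub_one_le_exp {t x b : ℝ} (ht : 0 ≤ t) (hx : -1 ≤ x) (hb₀ : 0 ≤ b)
    (hb₁ : b ≤ 1) : 1 + t * ((1 + x) ^ b - 1) ≤ exp (t * b * x) :=
  calc 1 + t * ((1 + x) ^ b - 1)
      ≤ 1 + t * (b * x) := by
        gcongr
        linarith [rpow_one_add_le_one_add_mul_self hx hb₀ hb₁]
    _ ≤ exp (t * b * x) := by
        rw [← mul_assoc, add_comm]
        exact add_one_le_exp _

theorem one_add_mul_rpow_sub_one_pow_le_exp (n : ℕ) {t x b : ℝ} (ht : 0 ≤ t) (hx : 0 ≤ x)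
    (hb₀ : 0 ≤ b) (hb₁ : b ≤ 1) : (1 + t * ((1 + x) ^ b - 1)) ^ n ≤ exp (n * t * b * x) := by
  have hbase : 0 ≤ 1 + t * ((1 + x) ^ b - 1) := by
    have : 1 ≤ (1 + x) ^ b := one_le_rpow (by linarith) hb₀
    nlinarith
  calc (1 + t * ((1 + x) ^ b - 1)) ^ n
      ≤ exp (t * b * x) ^ n :=
        pow_le_pow_left₀ hbase (one_add_mul_rpow_sub_one_le_exp ht (by linarith) hb₀ hb₁) n
    _ = exp (n * t * b * x) := by rw [← exp_nat_mul]; ring_nf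

theorem chi_square_divergence_bound_general (d : ℕ) (hd : 6 ≤ d) (a : ℝ)
    (ha1 : 1 / 4 ≤ a) (ha2 : a < 1 / 2) (s : ℕ)
    (hs1 : (d : ℝ) ^ a ≤ (s : ℝ)) :
    (1 + (s : ℝ) / (d : ℝ) *
        (Real.exp ((1 / 2 - a) * Real.log (1 + (d : ℝ) * Real.log d / (s : ℝ) ^ 2)) - 1)) ^ s
      ≤ (d : ℝ) ^ (1 / 2 - a) := by
  have hd₁ : (1 : ℝ) ≤ d := by exact_mod_cast (by omega : 1 ≤ d)
  have hs₀ : (s : ℝ) ≠ 0 := (one_pos.trans_le ((one_le_rpow hd₁ (by linarith)).trans hs1)).ne'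
  have hx : 0 ≤ (d : ℝ) * log d / (s : ℝ) ^ 2 := by
    have := log_nonneg hd₁
    positivity
  rw [mul_comm (1 / 2 - a), ← rpow_def_of_pos (by positivity)]
  calc _ ≤ exp (s * (s / d) * (1 / 2 - a) * (d * log d / s ^ 2)) :=
        one_add_mul_rpow_sub_one_pow_le_exp s (by positivity) hx (by linarith) (by linarith)
    _ = exp (log d * (1 / 2 - a)) := by
        congr 1
        field_simp
    _ = (d : ℝ) ^ (1 / 2 - a) := (rpow_def_of_pos (by positivity) _).symm

/-- Inequality (20): for `d ≥ 6`, `a ∈ [1/4, 1/2)`, `d^a ≤ s ≤ d` and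
`ρ² = (1/2 - a) log(1 + d (log d)/s²)`, one has `(1 + (s/d)(e^{ρ²} - 1))^s ≤ d^{1/2 - a}`. -/
theorem chi_square_divergence_bound (d : ℕ) (hd : 6 ≤ d) (a : ℝ)
    (ha1 : 1 / 4 ≤ a) (ha2 : a < 1 / 2) (s : ℕ)
    (hs1 : (d : ℝ) ^ a ≤ (s : ℝ)) (hs2 : s ≤ d) :
    (1 + (s : ℝ) / (d : ℝ) *
        (Real.exp ((1 / 2 - a) * Real.log (1 + (d : ℝ) * Real.log d / (s : ℝ) ^ 2)) - 1)) ^ s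
      ≤ (d : ℝ) ^ (1 / 2 - a) :=
  chi_square_divergence_bound_general d hd a ha1 ha2 s hs1
end
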